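/- arXiv:math/0507450 — 4 statements merged into one kernel-verified Lean document; each statement's English description precedes it below -/
import Mathlib

section
/- For every even Schwartz function φ with φ̂ supported in [-1,1], one has (1/2)∬ φ̂(u)φ̂(v)·𝟙_{|u+v|≥1, |u-v|≤1} du dv = −(∫_{-∞}^∞ φ(x)² · (sin 2πx)/(2πx) dx − (1/2)φ(0)²). -/
open MeasureTheory Real
open scoped FourierTransform
open scoped Convolution SchwartzMap

/-! `φ̂ ⊗ φ̂` lives on the square `[-1,1]²`, where `|u+v| ≥ 1` forces `|u-v| ≤ 1`; so the region of
integration is the complement of the strip `|u+v| < 1`. The integral over the whole plane is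
`(∫ φ̂)² = φ(0)²`. The integral over the strip is
`∫_{-1}^{1} φ̂ ⋆ φ̂ = ∫ 𝓕(φ²) · 𝟙_{(-1,1)} = ∫ φ² · 𝓕 𝟙_{(-1,1)}`, and
`𝓕 𝟙_{(-1,1)}(x) = sin(2πx)/(πx)`. -/

theorem abs_sub_le_of_le_abs_add {u v c : ℝ} (hu : |u| ≤ c) (hv : |v| ≤ c) (h : c ≤ |u + v|) :
    |u - v| ≤ c := by
  rw [abs_le] at *
  rcases le_abs.mp h with h' | h' <;> constructor <;> linarith

theorem norm_indicator_one_le {α R : Type*} [SeminormedRing R] [NormOneClass R] (s : Set α)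
    (a : α) : ‖s.indicator (1 : α → R) a‖ ≤ 1 :=
  (norm_indicator_le_norm_self _ _).trans_eq norm_one

theorem Real.integral_fourier_mul_eq {V : Type*} [NormedAddCommGroup V] [InnerProductSpace ℝ V]
    [FiniteDimensional ℝ V] [MeasurableSpace V] [BorelSpace V] {f g : V → ℂ}
    (hf : Integrable f) (hg : Integrable g) :
    ∫ ξ, 𝓕 f ξ * g ξ = ∫ x, f x * 𝓕 g x := by
  simpa using! VectorFourier.integral_fourierIntegral_smul_eq_flip (L := innerₗ V)
    Real.continuous_fourierChar continuous_inner hf hg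

theorem integral_mul_convolution_eq_integral_prod {G : Type*} [AddCommGroup G] [MeasurableSpace G]
    [MeasurableAdd₂ G] [MeasurableNeg G] {μ : Measure G} [SFinite μ] [μ.IsAddLeftInvariant]
    {f g w : G → ℂ} (hf : Integrable f μ) (hg : Integrable g μ) (hw : Measurable w) {C : ℝ}
    (hC : ∀ t, ‖w t‖ ≤ C) :
    ∫ t, w t * (f ⋆[ContinuousLinearMap.mul ℂ ℂ, μ] g) t ∂μ
      = ∫ p, w (p.1 + p.2) * (f p.1 * g p.2) ∂(μ.prod μ) := by
  set F : G × G → ℂ := fun p ↦ w p.2 * (f p.1 * g (p.2 - p.1))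
  have hshear := measurePreserving_prod_add μ μ
  have hemb := (MeasurableEquiv.shearAddRight G).measurableEmbedding
  have hF_shear : (F ∘ fun z : G × G ↦ (z.1, z.1 + z.2))
      = fun p : G × G ↦ w (p.1 + p.2) * (f p.1 * g p.2) := by
    ext p; simp [F]
  have hF : Integrable F (μ.prod μ) := by
    rw [← hshear.integrable_comp_emb hemb, hF_shear]
    exact (hf.mul_prod hg).bdd_mul (hw.comp measurable_add).aestronglyMeasurable
      (ae_of_all _ fun p ↦ hC (p.1 + p.2))
  calc ∫ t, w t * (f ⋆[ContinuousLinearMap.mul ℂ ℂ, μ] g) t ∂μ = ∫ t, ∫ u, F (u, t) ∂μ ∂μ := by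
        simp_rw [convolution_def, ContinuousLinearMap.mul_apply', ← integral_const_mul, F]
    _ = ∫ p, F p ∂(μ.prod μ) := (integral_prod_symm F hF).symm
    _ = _ := by rw [← hshear.integral_comp hemb, ← hF_shear]; rfl

theorem SchwartzMap.fourier_fourier_apply_neg {V : Type*} [NormedAddCommGroup V]
    [InnerProductSpace ℝ V] [FiniteDimensional ℝ V] [MeasurableSpace V] [BorelSpace V]
    (φ : 𝓢(V, ℂ)) (x : V) : 𝓕 (𝓕 φ) (-x) = φ x := by
  rw [SchwartzMap.fourier_coe, ← Real.fourierInv_eq_fourier_neg, ← SchwartzMap.fourierInv_coe,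
    FourierTransform.fourierInv_fourier_eq]

theorem SchwartzMap.fourier_mul_eq_convolution {V : Type*} [NormedAddCommGroup V]
    [InnerProductSpace ℝ V] [FiniteDimensional ℝ V] [MeasurableSpace V] [BorelSpace V]
    (φ ψ : 𝓢(V, ℂ)) :
    𝓕 (fun x ↦ φ x * ψ x) = 𝓕 (φ : V → ℂ) ⋆[ContinuousLinearMap.mul ℂ ℂ] 𝓕 (ψ : V → ℂ) := by
  set c := SchwartzMap.convolution (ContinuousLinearMap.mul ℂ ℂ) (𝓕 φ) (𝓕 ψ)
  have hc : 𝓕⁻ (c : V → ℂ) = fun x ↦ φ x * ψ x := by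
    ext x
    rw [Real.fourierInv_eq_fourier_neg, ← SchwartzMap.fourier_coe, SchwartzMap.fourier_convolution,
      SchwartzMap.pairing_apply_apply]
    simp only [SchwartzMap.fourier_fourier_apply_neg, ContinuousLinearMap.mul_apply']
  ext x
  rw [← hc, ← SchwartzMap.fourierInv_coe, ← SchwartzMap.fourier_coe,
    FourierTransform.fourier_fourierInv_eq, SchwartzMap.convolution_apply]
  rfl

theorem Real.fourier_indicator_Ioo_neg_eq_sin_div {a : ℝ} (ha : 0 ≤ a) {x : ℝ} (hx : x ≠ 0) :
    𝓕 ((Set.Ioo (-a) a).indicator (1 : ℝ → ℂ)) x = ((sin (2 * π * a * x) / (π * x) : ℝ) : ℂ) := by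
  set c : ℂ := -(2 * π * x : ℂ) * Complex.I
  have hc : c ≠ 0 := by simp [c, pi_ne_zero, hx]
  calc 𝓕 ((Set.Ioo (-a) a).indicator (1 : ℝ → ℂ)) x
        = ∫ v in Set.Ioo (-a) a, Complex.exp (c * v) := by
        rw [fourier_real_eq_integral_exp_smul, ← integral_indicator measurableSet_Ioo]
        congr with v
        by_cases hv : v ∈ Set.Ioo (-a) a
        · simp only [Set.indicator_of_mem hv, Pi.one_apply, smul_eq_mul, mul_one, c]
          congr 1
          push_cast
          ring
        · simp [Set.indicator_of_notMem hv]
    _ = ∫ v in -a..a, Complex.exp (c * v) := by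
        rw [intervalIntegral.integral_of_le (by linarith), integral_Ioc_eq_integral_Ioo]
    _ = (Complex.exp (c * a) - Complex.exp (c * ↑(-a))) / c := integral_exp_mul_complex hc
    _ = _ := by
        have hπx : (π * x : ℂ) ≠ 0 := by simp [pi_ne_zero, hx]
        rw [Complex.ofReal_div, Complex.ofReal_sin, Complex.sin, div_div,
          div_eq_div_iff hc (by simpa using hπx)]
        simp only [c]
        push_cast
        ring_nf
        rw [Complex.I_sq]
        ring

theorem SchwartzMap.integral_indicator_Ioo_add_mul_fourier {a : ℝ} (ha : 0 ≤ a) (φ ψ : 𝓢(ℝ, ℂ)) :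
    ∫ p : ℝ × ℝ,
        (Set.Ioo (-a) a).indicator 1 (p.1 + p.2) * (𝓕 (φ : ℝ → ℂ) p.1 * 𝓕 (ψ : ℝ → ℂ) p.2)
      = ∫ x, φ x * ψ x * ((sin (2 * π * a * x) / (π * x) : ℝ) : ℂ) := by
  set w : ℝ → ℂ := (Set.Ioo (-a) a).indicator 1
  have hw_meas : Measurable w := measurable_one.indicator measurableSet_Ioo
  have hw_int : Integrable w :=
    (integrable_indicator_iff measurableSet_Ioo).2 (integrableOn_const measure_Ioo_lt_top.ne)
  have hφψ : Integrable fun x ↦ φ x * ψ x := ψ.integrable.mul_of_top_right φ.memLp_top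
  have hw_fourier : 𝓕 w =ᵐ[volume] fun x ↦ ((sin (2 * π * a * x) / (π * x) : ℝ) : ℂ) := by
    filter_upwards [compl_mem_ae_iff.2 (measure_singleton (0 : ℝ))] with x hx
    exact Real.fourier_indicator_Ioo_neg_eq_sin_div ha hx
  calc _ = ∫ t, w t * (𝓕 (φ : ℝ → ℂ) ⋆[ContinuousLinearMap.mul ℂ ℂ] 𝓕 (ψ : ℝ → ℂ)) t :=
        (integral_mul_convolution_eq_integral_prod (𝓕 φ).integrable (𝓕 ψ).integrable hw_meas
          (norm_indicator_one_le _)).symm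
    _ = ∫ t, 𝓕 (fun x ↦ φ x * ψ x) t * w t := by
        simp_rw [SchwartzMap.fourier_mul_eq_convolution, mul_comm (w _)]
    _ = ∫ x, φ x * ψ x * 𝓕 w x := Real.integral_fourier_mul_eq hφψ hw_int
    _ = _ := integral_congr_ae <| by filter_upwards [hw_fourier] with x hx; rw [hx]

theorem mul_ite_eq_sub_indicator_Ioo_add {g : ℝ → ℂ}
    (hsupp : Function.support g ⊆ Set.Icc (-1) 1) (u v : ℝ) :
    g u * g v * (if 1 ≤ |u + v| ∧ |u - v| ≤ 1 then (1 : ℂ) else 0)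
      = g u * g v - (Set.Ioo (-1) 1).indicator 1 (u + v) * (g u * g v) := by
  by_cases hu : g u = 0
  · simp [hu]
  by_cases hv : g v = 0
  · simp [hv]
  have hu' : |u| ≤ 1 := abs_le.2 (hsupp hu)
  have hv' : |v| ≤ 1 := abs_le.2 (hsupp hv)
  by_cases hs : 1 ≤ |u + v|
  · have hnot : u + v ∉ Set.Ioo (-1) 1 := fun h ↦ (abs_lt.2 h).not_ge hs
    simp [hnot, hs, abs_sub_le_of_le_abs_add hu' hv' hs]
  · have hmem : u + v ∈ Set.Ioo (-1) 1 := abs_lt.1 (not_le.1 hs)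
    simp [hmem, hs]

theorem stmt_2_general (φ : SchwartzMap ℝ ℂ)
    (hsupp : Function.support (𝓕 (fun x : ℝ => φ x)) ⊆ Set.Icc (-1 : ℝ) 1) :
    (1 / 2 : ℂ) *
        ∫ p : ℝ × ℝ,
          𝓕 (fun x : ℝ => φ x) p.1 * 𝓕 (fun x : ℝ => φ x) p.2 *
            (if 1 ≤ |p.1 + p.2| ∧ |p.1 - p.2| ≤ 1 then (1 : ℂ) else 0)
      = -((∫ x : ℝ, (φ x) ^ 2 * ((Real.sin (2 * π * x) / (2 * π * x) : ℝ) : ℂ))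
            - (1 / 2) * (φ 0) ^ 2) := by
  set g := 𝓕 (fun x : ℝ => φ x)
  have hg : Integrable g := (𝓕 φ).integrable
  have hg_prod : Integrable fun p : ℝ × ℝ ↦ g p.1 * g p.2 := hg.mul_prod hg
  have hstrip_int : Integrable fun p : ℝ × ℝ ↦
      (Set.Ioo (-1) 1).indicator 1 (p.1 + p.2) * (g p.1 * g p.2) :=
    hg_prod.bdd_mul
      ((measurable_one.indicator measurableSet_Ioo).comp measurable_add).aestronglyMeasurable
      (ae_of_all _ fun p ↦ norm_indicator_one_le _ (p.1 + p.2))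
  have hφ0 : ∫ u, g u = φ 0 := by
    rw [← FourierTransform.fourierInv_fourier_eq (F := 𝓢(ℝ, ℂ)) φ, SchwartzMap.fourierInv_coe,
      Real.fourierInv_eq]
    simp [g, SchwartzMap.fourier_coe]
  have hstrip : ∫ p : ℝ × ℝ, (Set.Ioo (-1) 1).indicator 1 (p.1 + p.2) * (g p.1 * g p.2)
      = 2 * ∫ x : ℝ, (φ x) ^ 2 * ((Real.sin (2 * π * x) / (2 * π * x) : ℝ) : ℂ) := by
    rw [SchwartzMap.integral_indicator_Ioo_add_mul_fourier zero_le_one φ φ, ← integral_const_mul]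
    congr with x
    rw [mul_one]
    push_cast
    ring
  simp_rw [mul_ite_eq_sub_indicator_Ioo_add hsupp]
  have hgg : ∫ p : ℝ × ℝ, g p.1 * g p.2 = (∫ u, g u) * ∫ u, g u := integral_prod_mul g g
  rw [integral_sub hg_prod hstrip_int, hgg, hφ0, hstrip]
  ring

/-- For an even Schwartz function `φ` with `supp φ̂ ⊆ [-1,1]`,
`(1/2) ∬ φ̂(u) φ̂(v) 𝟙_{|u+v|≥1, |u−v|≤1} du dv
  = −(∫ φ(x)² sin(2πx)/(2πx) dx − (1/2) φ(0)²)`. -/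
theorem stmt_2 (φ : SchwartzMap ℝ ℂ) (hφeven : ∀ x : ℝ, φ (-x) = φ x)
    (hsupp : Function.support (𝓕 (fun x : ℝ => φ x)) ⊆ Set.Icc (-1 : ℝ) 1) :
    (1 / 2 : ℂ) *
        ∫ p : ℝ × ℝ,
          𝓕 (fun x : ℝ => φ x) p.1 * 𝓕 (fun x : ℝ => φ x) p.2 *
            (if 1 ≤ |p.1 + p.2| ∧ |p.1 - p.2| ≤ 1 then (1 : ℂ) else 0)
      = -((∫ x : ℝ, (φ x) ^ 2 * ((Real.sin (2 * π * x) / (2 * π * x) : ℝ) : ℂ))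
            - (1 / 2) * (φ 0) ^ 2) :=
  stmt_2_general φ hsupp
end

section
/- For every integer n ≥ 2: the sum over m from 1 to n, and over compositions (λ₁,…,λ_m) of n into m positive parts, of ((−1)^{m+1}/m) · (n!/(λ₁!⋯λ_m!)) · (2^n − 2m) equals 2·(−1)^n. -/
/-!
The weight `∑ n!/(λ₁!⋯λ_m!)` of the compositions of `n` into `m` parts is, by inclusion–exclusion
over the vanishing parts of tuples, the iterated forward difference `Δ^m[xⁿ](0)` (it counts
surjections `Fin n → Fin m`). Telescoping `(1 + Δ) ∑_{m<N} (-Δ)^m = 1 - (-Δ)^N` with `Δ^N xⁿ = 0`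
for `N > n` gives `∑_{m<N} (-1)^m Δ^m[xⁿ](x + 1) = xⁿ`. At `x = -1` this is
`∑ (-1)^m Δ^m[xⁿ](0) = (-1)ⁿ`, the coefficient form of `e^{-z} = 1/(1 + (e^z - 1))`; at `x = 0`,
combined with `Δ^{m+1}[xⁿ⁺¹](0) = (m + 1) Δ^m[xⁿ](1)`, it gives `∑ (-1)^{m+1}/m Δ^m[xⁿ](0) = 0` for
`n ≥ 2`, the coefficient form of `z = log(1 + (e^z - 1))`.
-/

open Finset fwdDiff

theorem Finset.sum_Icc_one_eq_sum_range {M : Type*} [AddCommMonoid M] (f : ℕ → M) (n : ℕ) :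
    ∑ m ∈ Icc 1 n, f m = ∑ m ∈ range n, f (m + 1) := by
  rw [range_eq_Ico, sum_Ico_add' f 0 n 1, zero_add, Ico_add_one_right_eq_Icc]

theorem sum_range_neg_one_pow_smul_fwdDiff_iter {M G : Type*} [AddCommMonoid M] [AddCommGroup G]
    (f : M → G) (h x : M) (N : ℕ) :
    ∑ m ∈ range N, (-1 : ℤ) ^ m • Δ_[h] ^[m] f (x + h) = f x - (-1 : ℤ) ^ N • Δ_[h] ^[N] f x := by
  induction N with
  | zero => simp
  | succ N ih =>
    rw [sum_range_succ, ih, Function.iterate_succ_apply', fwdDiff, pow_succ, mul_neg_one,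
      neg_smul, smul_sub]
    abel

section CommRing

variable {R : Type*} [CommRing R]

theorem sum_range_neg_one_pow_mul_fwdDiff_iter_pow {n N : ℕ} (hN : n < N) (x : R) :
    ∑ m ∈ range N, (-1 : R) ^ m * Δ_[1] ^[m] (fun r : R ↦ r ^ n) (x + 1) = x ^ n := by
  simpa [fwdDiff_iter_pow_eq_zero_of_lt hN, zsmul_eq_mul] using
    sum_range_neg_one_pow_smul_fwdDiff_iter (fun r : R ↦ r ^ n) 1 x N

theorem fwdDiff_iter_pow_zero_eq_sum (m n : ℕ) :
    Δ_[1] ^[m] (fun r : R ↦ r ^ n) 0 =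
      ∑ k ∈ range (m + 1), (-1 : R) ^ (m - k) * m.choose k * (k : R) ^ n := by
  simp [fwdDiff_iter_eq_sum_shift, zsmul_eq_mul]

theorem fwdDiff_iter_succ_pow_succ_zero (m n : ℕ) :
    Δ_[1] ^[m + 1] (fun r : R ↦ r ^ (n + 1)) 0 = (m + 1) * Δ_[1] ^[m] (fun r : R ↦ r ^ n) 1 := by
  rw [fwdDiff_iter_pow_zero_eq_sum, sum_range_succ', fwdDiff_iter_eq_sum_shift, mul_sum]
  simp only [Nat.cast_zero, zero_pow n.succ_ne_zero, mul_zero, add_zero]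
  refine sum_congr rfl fun k _ ↦ ?_
  have hchoose : ((m + 1 : ℕ).choose (k + 1) : R) * (k + 1) = (m + 1) * m.choose k := by
    exact_mod_cast congrArg (Nat.cast : ℕ → R) (Nat.add_one_mul_choose_eq m k).symm
  rw [Nat.add_sub_add_right, zsmul_eq_mul]
  push_cast
  linear_combination (-1 : R) ^ (m - k) * (k + 1 : R) ^ n * hchoose

theorem sum_Icc_neg_one_pow_mul_fwdDiff_iter_pow_zero {n : ℕ} (hn : n ≠ 0) :
    ∑ m ∈ Icc 1 n, (-1 : R) ^ m * Δ_[1] ^[m] (fun r : R ↦ r ^ n) 0 = (-1) ^ n := by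
  have h := sum_range_neg_one_pow_mul_fwdDiff_iter_pow n.lt_succ_self (-1 : R)
  rw [neg_add_cancel, sum_range_succ'] at h
  simp only [pow_zero, Function.iterate_zero, id, zero_pow hn, mul_zero, add_zero] at h
  rwa [sum_Icc_one_eq_sum_range]

theorem sum_Icc_neg_one_pow_div_mul_fwdDiff_iter_pow_zero {K : Type*} [Field K] [CharZero K]
    {n : ℕ} (hn : 2 ≤ n) :
    ∑ m ∈ Icc 1 n, (-1 : K) ^ (m + 1) / m * Δ_[1] ^[m] (fun r : K ↦ r ^ n) 0 = 0 := by
  obtain ⟨k, rfl⟩ : ∃ k, n = k + 1 := ⟨n - 1, by omega⟩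
  rw [sum_Icc_one_eq_sum_range]
  calc _ = ∑ m ∈ range (k + 1), (-1 : K) ^ m * Δ_[1] ^[m] (fun r : K ↦ r ^ k) (0 + 1) := by
        refine sum_congr rfl fun m _ ↦ ?_
        rw [fwdDiff_iter_succ_pow_succ_zero, zero_add]
        push_cast
        field_simp
        ring
    _ = 0 := by rw [sum_range_neg_one_pow_mul_fwdDiff_iter_pow k.lt_succ_self, zero_pow (by omega)]

theorem ite_forall_ne_zero_eq_sum {ι : Type*} [Fintype ι] [DecidableEq ι] (f : ι → ℕ) :
    (if ∀ i, f i ≠ 0 then 1 else 0 : R) =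
      ∑ t : Finset ι, (-1) ^ #tᶜ * ∏ i, (if i ∈ t then 1 else 0 : R) ^ f i := by
  calc (if ∀ i, f i ≠ 0 then 1 else 0 : R)
      = ∏ i, (1 + -(0 : R) ^ f i) := by
        split_ifs with h
        · exact (prod_eq_one fun i _ ↦ by simp [h i]).symm
        · obtain ⟨i, hi⟩ := not_forall_not.mp h
          exact (prod_eq_zero (mem_univ i) (by simp [hi])).symm
    _ = ∑ t : Finset ι, (-1) ^ #tᶜ * ∏ i, (if i ∈ t then 1 else 0 : R) ^ f i := by
        rw [Fintype.prod_add]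
        refine sum_congr rfl fun t _ ↦ ?_
        rw [prod_const_one, one_mul, prod_neg]
        simp [ite_pow, prod_ite, filter_not, compl_eq_univ_sdiff]

theorem sum_multinomial_forall_ne_zero_eq_fwdDiff_iter_pow {ι : Type*} [Fintype ι] [DecidableEq ι]
    (n : ℕ) :
    ∑ f ∈ (univ : Finset ι).piAntidiag n with ∀ i, f i ≠ 0, (Nat.multinomial univ f : R) =
      Δ_[1] ^[Fintype.card ι] (fun r : R ↦ r ^ n) 0 := by
  calc ∑ f ∈ (univ : Finset ι).piAntidiag n with ∀ i, f i ≠ 0, (Nat.multinomial univ f : R)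
      = ∑ f ∈ (univ : Finset ι).piAntidiag n,
          (Nat.multinomial univ f : R) * (if ∀ i, f i ≠ 0 then 1 else 0) := by
        rw [sum_filter]; simp
    _ = ∑ t : Finset ι, (-1) ^ #tᶜ * ∑ f ∈ (univ : Finset ι).piAntidiag n,
          (Nat.multinomial univ f : R) * ∏ i, (if i ∈ t then 1 else 0 : R) ^ f i := by
        simp_rw [ite_forall_ne_zero_eq_sum, mul_sum]
        rw [sum_comm]
        exact sum_congr rfl fun t _ ↦ sum_congr rfl fun f _ ↦ by ring
    _ = ∑ t : Finset ι, (-1) ^ (Fintype.card ι - #t) * (#t : R) ^ n := by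
        simp_rw [← sum_pow_eq_sum_piAntidiag, sum_boole, card_compl]
        simp
    _ = _ := by
        rw [fwdDiff_iter_pow_zero_eq_sum, ← powerset_univ,
          sum_powerset_apply_card (fun k ↦ (-1 : R) ^ (Fintype.card ι - k) * (k : R) ^ n),
          card_univ]
        exact sum_congr rfl fun k _ ↦ by rw [nsmul_eq_mul]; ring

end CommRing

theorem Composition.sum_factorial_div_prod_factorial_eq_sum_multinomial {K : Type*} [Field K]
    [CharZero K] (n m : ℕ) :
    ∑ c : Composition n with c.length = m,
        (n.factorial : K) / ((c.blocks.map Nat.factorial).prod : K) =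
      ∑ f ∈ (univ : Finset (Fin m)).piAntidiag n with ∀ i, f i ≠ 0,
        (Nat.multinomial univ f : K) := by
  symm
  refine sum_bij (fun f hf ↦ ⟨List.ofFn f, ?_, ?_⟩) ?_ ?_ ?_ ?_
  · simp only [mem_filter, mem_piAntidiag] at hf
    simpa [List.mem_ofFn, Nat.pos_iff_ne_zero] using hf.2
  · simp only [mem_filter, mem_piAntidiag] at hf
    rw [List.sum_ofFn, hf.1.1]
  · intro f _
    simp [Composition.length]
  · intro f _ g _ hfg
    exact List.ofFn_injective (congrArg Composition.blocks hfg)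
  · intro c hc
    simp only [mem_filter, mem_univ, true_and] at hc
    subst hc
    refine ⟨c.blocksFun, ?_, Composition.ext c.ofFn_blocksFun⟩
    simp only [mem_filter, mem_piAntidiag]
    exact ⟨⟨c.sum_blocksFun, fun _ _ ↦ mem_univ _⟩,
      fun i ↦ Nat.pos_iff_ne_zero.mp (c.one_le_blocksFun i)⟩
  · intro f hf
    simp only [mem_filter, mem_piAntidiag] at hf
    have hspec := Nat.multinomial_spec univ f
    rw [hf.1.1] at hspec
    have hprod : ((∏ i, (f i).factorial : ℕ) : K) ≠ 0 :=
      Nat.cast_ne_zero.mpr (prod_ne_zero_iff.mpr fun i _ ↦ Nat.factorial_ne_zero _)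
    simp only [List.map_ofFn, List.prod_ofFn, Function.comp_apply]
    rw [eq_div_iff hprod]
    exact_mod_cast (mul_comm _ _).trans hspec

/-- For `n ≥ 2`,
`Σ_{m=1}^n Σ_{λ₁+⋯+λ_m=n, λ_j≥1} ((−1)^{m+1}/m) · (n!/(λ₁!⋯λ_m!)) · (2^n − 2m)
  = 2·(−1)^n`. -/
theorem stmt_5 (n : ℕ) (hn : 2 ≤ n) :
    (∑ m ∈ Finset.Icc 1 n,
        ∑ c ∈ Finset.univ.filter (fun c : Composition n => c.length = m),
          ((-1 : ℝ) ^ (m + 1) / m) *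
            ((n.factorial : ℝ) / ((c.blocks.map Nat.factorial).prod : ℝ)) *
            ((2 : ℝ) ^ n - 2 * m))
      = 2 * (-1 : ℝ) ^ n := by
  have hcomp (m : ℕ) : ∑ c ∈ univ.filter (fun c : Composition n => c.length = m),
      (n.factorial : ℝ) / ((c.blocks.map Nat.factorial).prod : ℝ) =
        Δ_[1] ^[m] (fun r : ℝ ↦ r ^ n) 0 := by
    rw [Composition.sum_factorial_div_prod_factorial_eq_sum_multinomial]
    -- `convert` reconciles the two `Decidable` instances of the filter predicate
    convert sum_multinomial_forall_ne_zero_eq_fwdDiff_iter_pow (R := ℝ) (ι := Fin m) n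
    exact (Fintype.card_fin m).symm
  simp_rw [← sum_mul, ← mul_sum, hcomp]
  calc _ = 2 ^ n * ∑ m ∈ Icc 1 n, (-1 : ℝ) ^ (m + 1) / m * Δ_[1] ^[m] (fun r : ℝ ↦ r ^ n) 0
        + 2 * ∑ m ∈ Icc 1 n, (-1 : ℝ) ^ m * Δ_[1] ^[m] (fun r : ℝ ↦ r ^ n) 0 := by
        rw [mul_sum, mul_sum, ← sum_add_distrib]
        refine sum_congr rfl fun m hm ↦ ?_
        have hm : (m : ℝ) ≠ 0 := Nat.cast_ne_zero.mpr (by have := (mem_Icc.mp hm).1; omega)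
        field_simp
        ring
    _ = 2 * (-1) ^ n := by
        rw [sum_Icc_neg_one_pow_div_mul_fwdDiff_iter_pow_zero hn,
          sum_Icc_neg_one_pow_mul_fwdDiff_iter_pow_zero (by omega)]
        ring
end

section
/- Let N be a prime, b a positive integer with gcd(N,b)=1, Q an integer with gcd(Q,N)=1, r = gcd(Q,b), and suppose gcd(r, b/r) = 1. Then S(m², Q; Nb) = (1/φ(Nb/r)) Σ_{χ mod Nb/r} χ̄(Q/r) χ(r) R(m²,r) G_χ(m²) G_χ(1), where R(n,r) is the Ramanujan sum and G_χ the Gauss sum modulo Nb/r. -/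
/-!
Write `N b = r M` with `M = N b / r` coprime to `r`, and `Q = r Q'`. By the Chinese remainder
theorem (with `u M + v r = 1`) the Kloosterman sum modulo `r M` is the product of one modulo `r`
and one modulo `M`. Modulo `r` the second argument vanishes and what is left is the Ramanujan sum
`R(m², r)`; modulo `M`, the substitution `d ↦ r̄ d` turns the factor into `S(m², Q' r̄; M)`.
On the other side, expanding `G_χ(m²) G_χ(1)` as a double sum over units and summing
`χ(r a c / Q')` over all characters picks out `c = Q' r̄ ā`, which gives
`φ(M) S(m², Q' r̄; M)`.
-/

open Real

/-- The Gauss sum `G_χ(n) = Σ_{a mod M} χ(a) e^{2πian/M}`. -/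
noncomputable def gaussG (M : ℕ) [NeZero M] (χ : DirichletCharacter ℂ M) (n : ℤ) : ℂ :=
  ∑ a : ZMod M, χ a * Complex.exp (2 * π * Complex.I * ((a.val : ℂ) * n) / M)

/-- The Kloosterman sum `S(m, n; q) = Σ*_{d mod q} e((md + n d̄)/q)`. -/
noncomputable def kloosterman (q : ℕ) [NeZero q] (m n : ℤ) : ℂ :=
  ∑ d : (ZMod q)ˣ,
    Complex.exp (2 * π * Complex.I *
      ((m : ℂ) * (((d : ZMod q)).val : ℂ) +
        (n : ℂ) * ((((d⁻¹ : (ZMod q)ˣ) : ZMod q)).val : ℂ)) / q)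

/-- The Ramanujan sum `R(n, r) = Σ*_{a mod r} e(an/r)`. -/
noncomputable def ramanujanSum (r : ℕ) [NeZero r] (n : ℤ) : ℂ :=
  ∑ a : (ZMod r)ˣ,
    Complex.exp (2 * π * Complex.I * ((((a : ZMod r)).val : ℂ) * n) / r)

open ZMod

noncomputable def kloostermanZMod {q : ℕ} [NeZero q] (a b : ZMod q) : ℂ :=
  ∑ d : (ZMod q)ˣ, stdAddChar (a * (d : ZMod q) + b * ((d⁻¹ : (ZMod q)ˣ) : ZMod q))

lemma kloosterman_eq_kloostermanZMod (q : ℕ) [NeZero q] (m n : ℤ) :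
    kloosterman q m n = kloostermanZMod (m : ZMod q) (n : ZMod q) := by
  refine Finset.sum_congr rfl fun d _ => ?_
  have h : (m : ZMod q) * d + n * ((d⁻¹ : (ZMod q)ˣ) : ZMod q) =
      ((m * (d : ZMod q).val + n * ((d⁻¹ : (ZMod q)ˣ) : ZMod q).val : ℤ) : ZMod q) := by
    push_cast [natCast_zmod_val]; rfl
  rw [h, stdAddChar_coe]
  push_cast
  ring_nf

lemma ramanujanSum_eq_kloostermanZMod (r : ℕ) [NeZero r] (n : ℤ) :
    ramanujanSum r n = kloostermanZMod (n : ZMod r) 0 := by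
  refine Finset.sum_congr rfl fun a _ => ?_
  have h : (n : ZMod r) * a + 0 * ((a⁻¹ : (ZMod r)ˣ) : ZMod r) =
      (((a : ZMod r).val * n : ℤ) : ZMod r) := by
    push_cast [natCast_zmod_val]; ring
  rw [h, stdAddChar_coe]
  push_cast
  ring_nf

lemma gaussG_eq_gaussSum (M : ℕ) [NeZero M] (χ : DirichletCharacter ℂ M) (n : ℤ) :
    gaussG M χ n = gaussSum χ (stdAddChar.mulShift (n : ZMod M)) := by
  refine Finset.sum_congr rfl fun a _ => ?_
  have h : (n : ZMod M) * a = ((a.val * n : ℤ) : ZMod M) := by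
    push_cast [natCast_zmod_val]; ring
  rw [AddChar.mulShift_apply, h, stdAddChar_coe]
  push_cast
  ring_nf

lemma kloostermanZMod_mul_unit {q : ℕ} [NeZero q] (a b : ZMod q) (w : (ZMod q)ˣ) :
    kloostermanZMod (a * (w : ZMod q)) b = kloostermanZMod a (b * (w : ZMod q)) := by
  refine Fintype.sum_bijective (w * ·) (Group.mulLeft_bijective w) _ _ fun d => ?_
  simp only [mul_inv_rev, Units.val_mul]
  congr 1
  linear_combination (-b * ↑d⁻¹) * w.mul_inv

lemma bijective_unitsMap_prod {r M : ℕ} (h : r.Coprime M) :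
    Function.Bijective fun d : (ZMod (r * M))ˣ =>
      (unitsMap (dvd_mul_right r M) d, unitsMap (dvd_mul_left M r) d) := by
  let e := chineseRemainder h
  have he (x) :
      e x = (castHom (dvd_mul_right r M) (ZMod r) x, castHom (dvd_mul_left M r) (ZMod M) x) :=
    DFunLike.congr_fun (RingHom.ext_zmod e.toRingHom (RingHom.prod _ _)) x
  convert ((Units.mapEquiv e.toMulEquiv).trans MulEquiv.prodUnits).bijective using 1
  funext d
  ext <;> simp [unitsMap, MulEquiv.prodUnits, he]

lemma sum_units_mul_eq_sum_mul_sum {R : Type*} [CommSemiring R] {r M : ℕ} [NeZero r] [NeZero M]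
    (h : r.Coprime M) (f : (ZMod r)ˣ → R) (g : (ZMod M)ˣ → R) :
    ∑ d : (ZMod (r * M))ˣ,
        f (unitsMap (dvd_mul_right r M) d) * g (unitsMap (dvd_mul_left M r) d) =
      (∑ d, f d) * ∑ d, g d := by
  rw [Finset.sum_mul_sum, ← Fintype.sum_prod_type']
  exact Fintype.sum_bijective _ (bijective_unitsMap_prod h) _ _ fun d => rfl

lemma stdAddChar_eq_mul_of_bezout {r M : ℕ} [NeZero r] [NeZero M] {u v : ℤ}
    (huv : u * M + v * r = 1) (x : ZMod (r * M)) :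
    stdAddChar x = stdAddChar ((u : ZMod r) * castHom (dvd_mul_right r M) (ZMod r) x) *
      stdAddChar ((v : ZMod M) * castHom (dvd_mul_left M r) (ZMod M) x) := by
  obtain ⟨k, rfl⟩ := ZMod.intCast_surjective x
  simp only [map_intCast, ← Int.cast_mul, stdAddChar_coe, ← Complex.exp_add]
  congr 1
  have hr : (r : ℂ) ≠ 0 := NeZero.ne _
  have hM : (M : ℂ) ≠ 0 := NeZero.ne _
  have huv' : (u : ℂ) * M + v * r = 1 := by exact_mod_cast huv
  push_cast
  field_simp
  linear_combination (-(k : ℂ)) * huv'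

lemma kloostermanZMod_eq_mul_of_bezout {r M : ℕ} [NeZero r] [NeZero M] {u v : ℤ}
    (huv : u * M + v * r = 1) (a b : ZMod (r * M)) :
    kloostermanZMod a b =
      kloostermanZMod ((u : ZMod r) * castHom (dvd_mul_right r M) (ZMod r) a)
          ((u : ZMod r) * castHom (dvd_mul_right r M) (ZMod r) b) *
        kloostermanZMod ((v : ZMod M) * castHom (dvd_mul_left M r) (ZMod M) a)
          ((v : ZMod M) * castHom (dvd_mul_left M r) (ZMod M) b) := by
  have h : r.Coprime M := Nat.isCoprime_iff_coprime.mp ⟨v, u, by linear_combination huv⟩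
  rw [kloostermanZMod, kloostermanZMod, kloostermanZMod, ← sum_units_mul_eq_sum_mul_sum h]
  refine Finset.sum_congr rfl fun d _ => ?_
  rw [stdAddChar_eq_mul_of_bezout huv]
  simp only [← map_inv, unitsMap, Units.coe_map, map_add, map_mul, mul_add, mul_assoc]
  rfl

lemma gaussSum_eq_sum_units {R : Type*} [CommRing R] {M : ℕ} [NeZero M]
    (χ : DirichletCharacter R M) (ψ : AddChar (ZMod M) R) :
    gaussSum χ ψ = ∑ a : (ZMod M)ˣ, χ a * ψ a := by
  refine (Fintype.sum_of_injective _ Units.val_injective _ _ (fun x hx => ?_) fun _ => rfl).symm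
  rw [χ.map_nonunit fun ⟨u, hu⟩ => hx ⟨u, hu⟩, zero_mul]

lemma sum_characters_mul_gaussSum_mul_gaussSum {R : Type*} [CommRing R] [IsDomain R] {M : ℕ}
    [NeZero M] [HasEnoughRootsOfUnity R (Monoid.exponent (ZMod M)ˣ)]
    (ψ₁ ψ₂ : AddChar (ZMod M) R) (w : (ZMod M)ˣ) :
    ∑ χ : DirichletCharacter R M, χ ↑w⁻¹ * gaussSum χ ψ₁ * gaussSum χ ψ₂ =
      M.totient * ∑ a : (ZMod M)ˣ, ψ₁ a * ψ₂ ↑(w * a⁻¹) := by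
  have orthogonality (a c : (ZMod M)ˣ) : ∑ χ : DirichletCharacter R M, χ ↑(w⁻¹ * a * c) =
      if w * a⁻¹ = c then (M.totient : R) else 0 := by
    refine (DirichletCharacter.sum_characters_eq R _).trans (if_congr ?_ rfl rfl)
    rw [Units.val_eq_one, mul_assoc, inv_mul_eq_one, eq_comm, ← eq_inv_mul_iff_mul_eq, mul_comm]
    exact eq_comm
  calc ∑ χ : DirichletCharacter R M, χ ↑w⁻¹ * gaussSum χ ψ₁ * gaussSum χ ψ₂
      = ∑ a : (ZMod M)ˣ, ∑ c : (ZMod M)ˣ,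
          ψ₁ a * ψ₂ c * ∑ χ : DirichletCharacter R M, χ ↑(w⁻¹ * a * c) := by
        simp only [gaussSum_eq_sum_units, mul_assoc, Finset.sum_mul_sum]
        simp only [Finset.mul_sum, Units.val_mul, map_mul]
        rw [Finset.sum_comm]
        refine Finset.sum_congr rfl fun a _ => ?_
        rw [Finset.sum_comm]
        exact Finset.sum_congr rfl fun c _ => Finset.sum_congr rfl fun χ _ => by ring
    _ = M.totient * ∑ a : (ZMod M)ˣ, ψ₁ a * ψ₂ ↑(w * a⁻¹) := by
        simp only [orthogonality, mul_ite, mul_zero, Finset.sum_ite_eq, Finset.mem_univ, if_true,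
          Finset.mul_sum]
        exact Finset.sum_congr rfl fun a _ => by ring

lemma sum_characters_mul_gaussG_mul_gaussG {M : ℕ} [NeZero M] (n : ℤ) (w : (ZMod M)ˣ) :
    ∑ χ : DirichletCharacter ℂ M, χ ↑w⁻¹ * gaussG M χ n * gaussG M χ 1 =
      M.totient * kloostermanZMod (n : ZMod M) w := by
  simp only [gaussG_eq_gaussSum, Int.cast_one, AddChar.mulShift_one,
    sum_characters_mul_gaussSum_mul_gaussSum, kloostermanZMod, AddChar.map_add_eq_mul,
    AddChar.mulShift_apply, Units.val_mul]

lemma kloosterman_mul_eq_ramanujanSum_mul {r M : ℕ} [NeZero r] [NeZero M] (h : r.Coprime M)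
    (n Q' : ℤ) :
    kloosterman (r * M) n (r * Q') =
      ramanujanSum r n * kloostermanZMod (n : ZMod M) (Q' * ↑(unitOfCoprime r h)⁻¹) := by
  obtain ⟨u, v, huv⟩ := Nat.isCoprime_iff_coprime.mpr h.symm
  set ur : (ZMod M)ˣ := unitOfCoprime r h
  have hv : ((ur⁻¹ : (ZMod M)ˣ) : ZMod M) = v := by
    refine Units.inv_eq_of_mul_eq_one_right ?_
    simpa [ur, mul_comm] using congrArg (Int.cast : ℤ → ZMod M) huv
  have hu : IsUnit (u : ZMod r) := by
    refine IsUnit.of_mul_eq_one (M : ZMod r) ?_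
    simpa using congrArg (Int.cast : ℤ → ZMod r) huv
  rw [kloosterman_eq_kloostermanZMod, kloostermanZMod_eq_mul_of_bezout huv]
  simp only [map_intCast]
  congr 1
  · rw [ramanujanSum_eq_kloostermanZMod, ← hu.unit_spec, mul_comm, kloostermanZMod_mul_unit]
    simp
  · have hrQ' : ((r * Q' : ℤ) : ZMod M) = ur * Q' := by simp [ur]
    rw [← hv, mul_comm, kloostermanZMod_mul_unit, hrQ', ← mul_assoc, Units.inv_mul, one_mul]

lemma isUnit_intCast_of_isCoprime {M : ℕ} {a : ℤ} (h : IsCoprime a M) :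
    IsUnit (a : ZMod M) := by
  obtain ⟨x, y, hxy⟩ := h
  refine IsUnit.of_mul_eq_one_right (x : ZMod M) ?_
  simpa using congrArg (Int.cast : ℤ → ZMod M) hxy

lemma starRingEnd_apply_unit {M : ℕ} [NeZero M] (χ : DirichletCharacter ℂ M) (u : (ZMod M)ˣ) :
    starRingEnd ℂ (χ u) = χ ↑u⁻¹ := by
  rw [← RCLike.star_def, MulChar.star_apply', MulChar.inv_apply, Ring.inverse_unit]

theorem kloosterman_mul_eq_sum_characters {r M : ℕ} [NeZero r] [NeZero M] (h : r.Coprime M)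
    (n Q' : ℤ) (hQ' : IsCoprime Q' M) :
    kloosterman (r * M) n (r * Q') = (1 / (M.totient : ℂ)) *
      ∑ χ : DirichletCharacter ℂ M, starRingEnd ℂ (χ (Q' : ZMod M)) * χ (r : ZMod M) *
        ramanujanSum r n * gaussG M χ n * gaussG M χ 1 := by
  set w : (ZMod M)ˣ := (isUnit_intCast_of_isCoprime hQ').unit * (unitOfCoprime r h)⁻¹
  have char_factor (χ : DirichletCharacter ℂ M) :
      starRingEnd ℂ (χ (Q' : ZMod M)) * χ (r : ZMod M) = χ ↑w⁻¹ := by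
    rw [← (isUnit_intCast_of_isCoprime hQ').unit_spec, starRingEnd_apply_unit,
      ← coe_unitOfCoprime r h, ← map_mul, ← Units.val_mul, mul_inv_rev, inv_inv, mul_comm]
  have hφ : (M.totient : ℂ) ≠ 0 := by exact_mod_cast (Nat.totient_pos.mpr (NeZero.pos M)).ne'
  calc kloosterman (r * M) n (r * Q')
      = ramanujanSum r n * kloostermanZMod (n : ZMod M) w := by
        rw [kloosterman_mul_eq_ramanujanSum_mul h, Units.val_mul, IsUnit.unit_spec]
    _ = (1 / (M.totient : ℂ)) * ∑ χ : DirichletCharacter ℂ M,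
          χ ↑w⁻¹ * gaussG M χ n * gaussG M χ 1 * ramanujanSum r n := by
        rw [← Finset.sum_mul, sum_characters_mul_gaussG_mul_gaussG]
        field_simp
    _ = _ := by
        simp only [← char_factor]
        congr 1
        exact Finset.sum_congr rfl fun χ _ => by ring

theorem stmt_12_general (N b : ℕ) (Q m : ℤ) (r M q : ℕ)
    [NeZero r] [NeZero M] [NeZero q]
    (hNb : Nat.Coprime N b) (hQN : Int.gcd Q N = 1)
    (hr : r = Int.gcd Q b) (hrb : Nat.Coprime r (b / r))
    (hM : M = N * b / r) (hq : q = N * b) :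
    kloosterman q (m ^ 2) Q
      = (1 / (M.totient : ℂ)) *
          ∑ χ : DirichletCharacter ℂ M,
            (starRingEnd ℂ) (χ ((Q / (r : ℤ) : ℤ) : ZMod M)) * χ (r : ZMod M) *
              ramanujanSum r (m ^ 2) * gaussG M χ (m ^ 2) * gaussG M χ 1 := by
  have hr_dvd_b : r ∣ b := Int.natCast_dvd_natCast.mp (hr ▸ Int.gcd_dvd_right Q b)
  have hr_dvd_Q : (r : ℤ) ∣ Q := hr ▸ Int.gcd_dvd_left Q b
  have hM' : M = N * (b / r) := by rw [hM, Nat.mul_div_assoc N hr_dvd_b]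
  have hq' : q = r * M := by rw [hq, hM', mul_left_comm, Nat.mul_div_cancel' hr_dvd_b]
  have hrM : r.Coprime M := hM' ▸ (Nat.Coprime.coprime_dvd_left hr_dvd_b hNb.symm).mul_right hrb
  have hQM : IsCoprime (Q / r) M := by
    rw [hM']
    push_cast
    refine IsCoprime.mul_right ?_ ?_
    · exact (Int.isCoprime_iff_gcd_eq_one.mpr hQN).of_isCoprime_of_dvd_left
        (Int.ediv_dvd_of_dvd hr_dvd_Q)
    · rw [Int.isCoprime_iff_gcd_eq_one, hr]
      exact Int.gcd_div_gcd_div_gcd (hr ▸ NeZero.pos r)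
  subst hq'
  conv_lhs => rw [← Int.mul_ediv_cancel' hr_dvd_Q]
  exact kloosterman_mul_eq_sum_characters hrM (m ^ 2) (Q / r) hQM

/-- Lemma C.3: for `N` prime, `gcd(N,b) = 1`, `gcd(Q,N) = 1`, `r = gcd(Q,b)`,
and `gcd(r, b/r) = 1`, we have
`S(m², Q; Nb) = (1/φ(Nb/r)) Σ_{χ mod Nb/r} χ̄(Q/r) χ(r) R(m², r) G_χ(m²) G_χ(1)`. -/
theorem stmt_12 (N b : ℕ) [NeZero b] (Q m : ℤ) (r M q : ℕ)
    [NeZero r] [NeZero M] [NeZero q]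
    (hN : N.Prime) (hNb : Nat.Coprime N b) (hQN : Int.gcd Q N = 1)
    (hr : r = Int.gcd Q b) (hrb : Nat.Coprime r (b / r))
    (hM : M = N * b / r) (hq : q = N * b) :
    kloosterman q (m ^ 2) Q
      = (1 / (M.totient : ℂ)) *
          ∑ χ : DirichletCharacter ℂ M,
            (starRingEnd ℂ) (χ ((Q / (r : ℤ) : ℤ) : ZMod M)) * χ (r : ZMod M) *
              ramanujanSum r (m ^ 2) * gaussG M χ (m ^ 2) * gaussG M χ 1 :=
  stmt_12_general N b Q m r M q hNb hQN hr hrb hM hq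
end

section
/- Let n ≥ 2 and let φ̂: ℝ → ℝ be even with support contained in [−1/(n−1), 1/(n−1)]. Then ∫⋯∫ φ̂(y₁)⋯φ̂(y_n)·(𝟙_{|y₁+⋯+y_n| ≤ 1} − 1) dy₁⋯dy_n = −2 ∫_0^{1/(n−1)}⋯∫_0^{1/(n−1)} φ̂(y₁)⋯φ̂(y_n)·𝟙_{y₁+⋯+y_n > 1} dy₁⋯dy_n. -/
open MeasureTheory

/-- Desymmetrization: for `n ≥ 2` and an even (continuous) function `φ̂`
supported in `[−1/(n−1), 1/(n−1)]`,
`∫⋯∫ φ̂(y₁)⋯φ̂(y_n) (𝟙_{|y₁+⋯+y_n| ≤ 1} − 1) dy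
  = −2 ∫_0^{1/(n−1)}⋯∫_0^{1/(n−1)} φ̂(y₁)⋯φ̂(y_n) 𝟙_{y₁+⋯+y_n > 1} dy`. -/
theorem stmt_17 (n : ℕ) (hn : 2 ≤ n) (φhat : ℝ → ℝ) (hcont : Continuous φhat)
    (heven : ∀ x, φhat (-x) = φhat x)
    (hsupp : Function.support φhat ⊆
      Set.Icc (-(1 / ((n : ℝ) - 1))) (1 / ((n : ℝ) - 1))) :
    (∫ y : Fin n → ℝ,
        (∏ i, φhat (y i)) *
          ((if |∑ i, y i| ≤ 1 then (1 : ℝ) else 0) - 1))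
      = -2 * ∫ y in (Set.univ.pi fun _ : Fin n =>
            Set.Icc (0 : ℝ) (1 / ((n : ℝ) - 1))),
          (∏ i, φhat (y i)) * (if 1 < ∑ i, y i then (1 : ℝ) else 0) := by
  have hn1 : (1:ℝ) ≤ (n:ℝ) - 1 := by
    have : (2:ℝ) ≤ (n:ℝ) := by exact_mod_cast hn
    linarith
  set ε : ℝ := 1 / ((n:ℝ) - 1) with hεdef
  have hεpos : 0 < ε := by
    apply div_pos one_pos; linarith
  have hmul : ((n:ℝ) - 1) * ε = 1 := by
    rw [hεdef]; field_simp
  set P : (Fin n → ℝ) → ℝ := fun y => ∏ i, φhat (y i) with hPdef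
  have hPsupp : ∀ y : Fin n → ℝ, P y ≠ 0 → ∀ i, -ε ≤ y i ∧ y i ≤ ε := by
    intro y h i
    have hφ : φhat (y i) ≠ 0 := by
      intro h0
      exact h (Finset.prod_eq_zero (Finset.mem_univ i) h0)
    have := hsupp hφ
    exact ⟨this.1, this.2⟩
  have hsumle : ∀ (y : Fin n → ℝ) (j : Fin n), y j ≤ 0 → (∀ i, y i ≤ ε) →
      ∑ i, y i ≤ 1 := by
    intro y j hj hb
    have h1 : ∑ i ∈ Finset.univ.erase j, y i ≤ (Finset.univ.erase j).card • ε :=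
      Finset.sum_le_card_nsmul _ _ _ (fun i _ => hb i)
    have hcard : (Finset.univ.erase j).card = n - 1 := by
      simp [Finset.card_erase_of_mem]
    have hcast : ((n - 1 : ℕ) : ℝ) = (n:ℝ) - 1 := by
      have h1 : 1 ≤ n := by omega
      push_cast [Nat.cast_sub h1]; ring
    have h2 : ∑ i ∈ Finset.univ.erase j, y i ≤ 1 := by
      calc ∑ i ∈ Finset.univ.erase j, y i ≤ (Finset.univ.erase j).card • ε := h1
        _ = ((n:ℝ) - 1) * ε := by rw [hcard, nsmul_eq_mul, hcast]
        _ = 1 := hmul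
    calc ∑ i, y i = ∑ i ∈ Finset.univ.erase j, y i + y j :=
          (Finset.sum_erase_add _ _ (Finset.mem_univ j)).symm
      _ ≤ 1 + 0 := add_le_add h2 hj
      _ = 1 := by ring
  have hsumge : ∀ (y : Fin n → ℝ) (j : Fin n), 0 ≤ y j → (∀ i, -ε ≤ y i) →
      -1 ≤ ∑ i, y i := by
    intro y j hj hb
    have := hsumle (fun i => -(y i)) j (neg_nonpos.mpr hj) (fun i => neg_le.mpr (hb i))
    have hs : ∑ i, -(y i) = -∑ i, y i := by simp
    rw [hs] at this
    linarith
  -- the two "signed" pieces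
  set Spos : Set (Fin n → ℝ) := Set.univ.pi fun _ : Fin n => Set.Ioi (0:ℝ) with hSpos
  set Sneg : Set (Fin n → ℝ) := Set.univ.pi fun _ : Fin n => Set.Iio (0:ℝ) with hSneg
  set SI : Set (Fin n → ℝ) := Set.univ.pi fun _ : Fin n => Set.Icc (0:ℝ) ε with hSI
  set g : (Fin n → ℝ) → ℝ := fun y => P y * (if 1 < ∑ i, y i then (1:ℝ) else 0) with hgdef
  set h : (Fin n → ℝ) → ℝ := fun y => P y * (if ∑ i, y i < -1 then (1:ℝ) else 0) with hhdef
  set A : (Fin n → ℝ) → ℝ := Spos.indicator g with hAdef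
  set B : (Fin n → ℝ) → ℝ := Sneg.indicator h with hBdef
  have i0 : Fin n := ⟨0, by omega⟩
  -- pointwise identity
  have key : ∀ y : Fin n → ℝ,
      P y * ((if |∑ i, y i| ≤ 1 then (1:ℝ) else 0) - 1) = -(A y + B y) := by
    intro y
    by_cases hy : ∀ i, 0 < y i
    · have hmemA : y ∈ Spos := by
        rw [hSpos, Set.mem_univ_pi]; exact fun i => hy i
      have hA : A y = P y * (if 1 < ∑ i, y i then (1:ℝ) else 0) :=
        Set.indicator_of_mem hmemA _
      have hB : B y = 0 := by
        apply Set.indicator_of_notMem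
        rw [hSneg, Set.mem_univ_pi]
        intro hc
        exact absurd (hc i0) (not_lt.2 (le_of_lt (hy i0)))
      have hspos : 0 < ∑ i, y i :=
        Finset.sum_pos (fun i _ => hy i) ⟨i0, Finset.mem_univ _⟩
      rw [hA, hB]
      by_cases hs : ∑ i, y i ≤ 1
      · rw [if_pos (abs_le.2 ⟨by linarith, hs⟩), if_neg (not_lt.2 hs)]; ring
      · rw [if_neg, if_pos (lt_of_not_ge hs)]
        · ring
        · rw [abs_le]; push_neg; intro _; linarith [lt_of_not_ge hs]
    · by_cases hy' : ∀ i, y i < 0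
      · have hmemB : y ∈ Sneg := by
          rw [hSneg, Set.mem_univ_pi]; exact fun i => hy' i
        have hB : B y = P y * (if ∑ i, y i < -1 then (1:ℝ) else 0) :=
          Set.indicator_of_mem hmemB _
        have hA : A y = 0 := by
          apply Set.indicator_of_notMem
          rw [hSpos, Set.mem_univ_pi]
          intro hc
          exact absurd (hc i0) (not_lt.2 (le_of_lt (hy' i0)))
        have hsneg : ∑ i, y i < 0 :=
          Finset.sum_neg (fun i _ => hy' i) ⟨i0, Finset.mem_univ _⟩
        rw [hA, hB]
        by_cases hs : -1 ≤ ∑ i, y i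
        · rw [if_pos (abs_le.2 ⟨hs, by linarith⟩), if_neg (not_lt.2 hs)]; ring
        · rw [if_neg, if_pos (lt_of_not_ge hs)]
          · ring
          · rw [abs_le]; push_neg; intro hc; linarith [lt_of_not_ge hs]
      · have hA : A y = 0 := by
          apply Set.indicator_of_notMem
          rw [hSpos, Set.mem_univ_pi]
          exact hy
        have hB : B y = 0 := by
          apply Set.indicator_of_notMem
          rw [hSneg, Set.mem_univ_pi]
          exact hy'
        rw [hA, hB]
        by_cases hP0 : P y = 0
        · rw [hP0]; ring
        · have hb := hPsupp y hP0
          obtain ⟨j, hj⟩ := not_forall.1 hy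
          obtain ⟨k, hk⟩ := not_forall.1 hy'
          have h1 : ∑ i, y i ≤ 1 :=
            hsumle y j (le_of_not_gt hj) (fun i => (hb i).2)
          have h2 : -1 ≤ ∑ i, y i :=
            hsumge y k (le_of_not_gt hk) (fun i => (hb i).1)
          rw [if_pos (abs_le.2 ⟨h2, h1⟩)]; ring
  -- integrability
  have hPc : Continuous P := by
    apply continuous_finset_prod
    exact fun i _ => hcont.comp (continuous_apply i)
  have hPcs : HasCompactSupport P := by
    apply HasCompactSupport.intro (isCompact_univ_pi fun _ : Fin n => isCompact_Icc (a := -ε) (b := ε))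
    intro y hy
    rw [Set.mem_univ_pi] at hy
    push_neg at hy
    obtain ⟨i, hi⟩ := hy
    have : φhat (y i) = 0 := by
      by_contra h0
      exact hi (hsupp h0)
    exact Finset.prod_eq_zero (Finset.mem_univ i) this
  have hPint : Integrable P := hPc.integrable_of_hasCompactSupport hPcs
  have hSmeas : Measurable fun y : Fin n → ℝ => ∑ i, y i :=
    Finset.measurable_sum _ fun i _ => measurable_pi_apply i
  have hgint : Integrable g := by
    apply (hPint.abs).mono'
    · exact hPc.aestronglyMeasurable.mul
        ((Measurable.ite (measurableSet_lt measurable_const hSmeas)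
          measurable_const measurable_const).aestronglyMeasurable)
    · filter_upwards with y
      show ‖P y * (if 1 < ∑ i, y i then (1:ℝ) else 0)‖ ≤ |P y|
      simp only [Real.norm_eq_abs, abs_mul]
      have : |if 1 < ∑ i, y i then (1:ℝ) else 0| ≤ 1 := by
        split <;> simp
      calc |P y| * |if 1 < ∑ i, y i then (1:ℝ) else 0| ≤ |P y| * 1 :=
            mul_le_mul_of_nonneg_left this (abs_nonneg _)
        _ = |P y| := by ring
  have hhint : Integrable h := by
    apply (hPint.abs).mono'
    · exact hPc.aestronglyMeasurable.mul
        ((Measurable.ite (measurableSet_lt hSmeas measurable_const)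
          measurable_const measurable_const).aestronglyMeasurable)
    · filter_upwards with y
      show ‖P y * (if ∑ i, y i < -1 then (1:ℝ) else 0)‖ ≤ |P y|
      simp only [Real.norm_eq_abs, abs_mul]
      have : |if ∑ i, y i < -1 then (1:ℝ) else 0| ≤ 1 := by
        split <;> simp
      calc |P y| * |if ∑ i, y i < -1 then (1:ℝ) else 0| ≤ |P y| * 1 :=
            mul_le_mul_of_nonneg_left this (abs_nonneg _)
        _ = |P y| := by ring
  have hSposm : MeasurableSet Spos := MeasurableSet.univ_pi fun _ => measurableSet_Ioi
  have hSnegm : MeasurableSet Sneg := MeasurableSet.univ_pi fun _ => measurableSet_Iio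
  have hSIm : MeasurableSet SI := MeasurableSet.univ_pi fun _ => measurableSet_Icc
  have hAint : Integrable A := hgint.indicator hSposm
  have hBint : Integrable B := hhint.indicator hSnegm
  -- B(-y) = A(y)
  have hBA : ∀ y : Fin n → ℝ, B (-y) = A y := by
    intro y
    have hPneg : P (-y) = P y := by
      rw [hPdef]
      exact Finset.prod_congr rfl fun i _ => heven (y i)
    have hsneg : ∑ i, (-y) i = -∑ i, y i := by
      simp
    by_cases hy : y ∈ Spos
    · have hmem : -y ∈ Sneg := by
        rw [hSneg, Set.mem_univ_pi]
        rw [hSpos, Set.mem_univ_pi] at hy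
        intro i
        have := Set.mem_Ioi.1 (hy i)
        simp only [Pi.neg_apply, Set.mem_Iio]
        linarith
      rw [hAdef, hBdef, Set.indicator_of_mem hmem, Set.indicator_of_mem hy]
      show P (-y) * (if ∑ i, (-y) i < -1 then (1:ℝ) else 0)
          = P y * (if 1 < ∑ i, y i then (1:ℝ) else 0)
      rw [hPneg, hsneg]
      congr 1
      by_cases hs : 1 < ∑ i, y i
      · rw [if_pos (by linarith), if_pos hs]
      · rw [if_neg (by intro hc; apply hs; linarith), if_neg hs]
    · have hmem : -y ∉ Sneg := by
        rw [hSneg, Set.mem_univ_pi]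
        rw [hSpos, Set.mem_univ_pi] at hy
        intro hc
        apply hy
        intro i
        have := hc i
        simp only [Pi.neg_apply, Set.mem_Iio] at this
        exact Set.mem_Ioi.2 (by linarith)
      rw [hAdef, hBdef, Set.indicator_of_notMem hmem, Set.indicator_of_notMem hy]
  have hintBA : ∫ y, B y = ∫ y, A y := by
    calc ∫ y, B y = ∫ y, B (-y) := (integral_neg_eq_self B volume).symm
      _ = ∫ y, A y := by simp_rw [hBA]
  -- A integral equals the RHS set integral
  have hindeq : ∀ y, Spos.indicator g y = SI.indicator g y := by
    intro y
    by_cases h1 : y ∈ Spos <;> by_cases h2 : y ∈ SI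
    · rw [Set.indicator_of_mem h1, Set.indicator_of_mem h2]
    · rw [Set.indicator_of_mem h1, Set.indicator_of_notMem h2]
      rw [hSI, Set.mem_univ_pi] at h2
      push_neg at h2
      obtain ⟨i, hi⟩ := h2
      rw [hSpos, Set.mem_univ_pi] at h1
      rw [Set.mem_Icc] at hi
      push_neg at hi
      have hgt : ε < y i := hi (le_of_lt (h1 i))
      have hφ : φhat (y i) = 0 := by
        by_contra h0
        have := hsupp h0
        exact absurd this.2 (not_le.2 hgt)
      show P y * (if 1 < ∑ i, y i then (1:ℝ) else 0) = 0
      have hP0 : P y = 0 := Finset.prod_eq_zero (Finset.mem_univ i) hφ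
      rw [hP0, zero_mul]
    · rw [Set.indicator_of_notMem h1, Set.indicator_of_mem h2]
      rw [hSpos, Set.mem_univ_pi] at h1
      push_neg at h1
      obtain ⟨j, hj⟩ := h1
      rw [hSI, Set.mem_univ_pi] at h2
      have hsum : ∑ i, y i ≤ 1 :=
        hsumle y j (le_of_not_gt (by simpa using hj)) (fun i => (h2 i).2)
      have hz : P y * (if 1 < ∑ i, y i then (1:ℝ) else 0) = 0 := by
        rw [if_neg (not_lt.2 hsum), mul_zero]
      exact hz.symm
    · rw [Set.indicator_of_notMem h1, Set.indicator_of_notMem h2]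
  have hAeq : ∫ y, A y = ∫ y in SI, g y := by
    rw [hAdef, ← integral_indicator hSIm]
    exact integral_congr_ae (Filter.Eventually.of_forall hindeq)
  -- put it together
  calc (∫ y : Fin n → ℝ, (∏ i, φhat (y i)) *
          ((if |∑ i, y i| ≤ 1 then (1 : ℝ) else 0) - 1))
      = ∫ y, -(A y + B y) := by
        apply integral_congr_ae
        filter_upwards with y
        exact key y
    _ = -((∫ y, A y) + ∫ y, B y) := by
        rw [integral_neg, integral_add hAint hBint]
    _ = -2 * ∫ y in SI, g y := by
        rw [hintBA, hAeq]; ring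
end
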